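/- arXiv:1711.10633 — 2 statements merged into one kernel-verified Lean document; each statement's English description precedes it below -/
import Mathlib

section
/- Let T ≥ 1, let X_1,…,X_T and Y_1,…,Y_T be finite nonempty types, let two (general) scenario trees be given by conditional probabilities p_t and q_t, and let d : X×Y → ℝ≥0 be a cost on path pairs. Fix 0 ≤ t ≤ T and a stage-t prefix pair (k,l). Then the sub-tree distance D_t(k,l) equals the nested distance LP value computed for the modified trees A(k) and B(l), where A(k) has conditional probabilities p'_τ equal to the point mass at k_τ for stages τ ≤ t and equal to p_τ for stages τ > t (and B(l) is defined analogously from q and l), with the same path cost d. -/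
open scoped NNReal Classical
open Finset

noncomputable section

/-- A full path of a `T`-stage scenario tree with stage types `X 0, …, X (T-1)`
(0-indexed: index `t` corresponds to stage `t+1` of the paper). -/
abbrev NDPath (X : ℕ → Type) (T : ℕ) := ∀ t : Fin T, X t.1

/-- A stage-`t` prefix (the history of the first `t` stages); `t = 0` is the root. -/
abbrev NDPre (X : ℕ → Type) (t : ℕ) := ∀ τ : Fin t, X τ.1

/-- The path `i` extends the stage-`t` prefix `k`. -/
def NDExtends {X : ℕ → Type} {T t : ℕ} (i : NDPath X T) (k : NDPre X t) : Prop :=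
  ∀ (τ : Fin t) (h : τ.1 < T), i ⟨τ.1, h⟩ = k τ

/-- The subtree weight `π_{k,l}` of a transport plan `π` on path pairs:
the total mass of `π` on path pairs extending the prefix pair `(k, l)`. -/
def NDsubw {X Y : ℕ → Type} {T : ℕ} [∀ n, Fintype (X n)] [∀ n, Fintype (Y n)]
    (π : NDPath X T → NDPath Y T → ℝ≥0) (t : ℕ) (k : NDPre X t) (l : NDPre Y t) : ℝ≥0 :=
  ∑ i : NDPath X T, ∑ j : NDPath Y T,
    if NDExtends i k ∧ NDExtends j l then π i j else 0

/-- The nested distance LP value: minimum of `∑ π(i,j) d(i,j)` over transport plans of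
total mass one satisfying the successor-form conditional marginal constraints. -/
def NDval {X Y : ℕ → Type} (T : ℕ) [∀ n, Fintype (X n)] [∀ n, Fintype (Y n)]
    (p : ∀ t, NDPre X t → X t → ℝ≥0) (q : ∀ t, NDPre Y t → Y t → ℝ≥0)
    (d : NDPath X T → NDPath Y T → ℝ≥0) : ℝ≥0 :=
  sInf { v | ∃ π : NDPath X T → NDPath Y T → ℝ≥0,
    (∑ i, ∑ j, π i j) = 1 ∧
    (∀ t, t < T → ∀ (k : NDPre X t) (l : NDPre Y t) (x : X t) (y : Y t),
      (∑ y' : Y t, NDsubw π (t+1) (Fin.snoc k x) (Fin.snoc l y'))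
          = p t k x * NDsubw π t k l ∧
      (∑ x' : X t, NDsubw π (t+1) (Fin.snoc k x') (Fin.snoc l y))
          = q t l y * NDsubw π t k l) ∧
    v = ∑ i, ∑ j, π i j * d i j }

/-- The sub-tree distance `D_t(k,l)`, defined by backward recursion: at `t = T` it is the
path cost, and for `t < T` it is the optimal value of the stage-`t` transport subproblem. -/
def NDsub {X Y : ℕ → Type} (T : ℕ) [∀ n, Fintype (X n)] [∀ n, Fintype (Y n)]
    (p : ∀ t, NDPre X t → X t → ℝ≥0) (q : ∀ t, NDPre Y t → Y t → ℝ≥0)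
    (d : NDPath X T → NDPath Y T → ℝ≥0)
    (t : ℕ) (k : NDPre X t) (l : NDPre Y t) : ℝ≥0 :=
  if h : t < T then
    sInf { v | ∃ π : X t → Y t → ℝ≥0,
      (∀ x, ∑ y, π x y = p t k x) ∧ (∀ y, ∑ x, π x y = q t l y) ∧
      v = ∑ x, ∑ y, π x y * NDsub T p q d (t+1) (Fin.snoc k x) (Fin.snoc l y) }
  else
    d (fun τ => k ⟨τ.1, lt_of_lt_of_le τ.2 (not_lt.mp h)⟩)
      (fun τ => l ⟨τ.1, lt_of_lt_of_le τ.2 (not_lt.mp h)⟩)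
  termination_by T - t
  decreasing_by omega

/-- The dynamic-programming value function `Φ_t(k,l,m)` with mass argument `m`. -/
def NDPhi {X Y : ℕ → Type} (T : ℕ) [∀ n, Fintype (X n)] [∀ n, Fintype (Y n)]
    (p : ∀ t, NDPre X t → X t → ℝ≥0) (q : ∀ t, NDPre Y t → Y t → ℝ≥0)
    (d : NDPath X T → NDPath Y T → ℝ≥0)
    (t : ℕ) (k : NDPre X t) (l : NDPre Y t) (m : ℝ≥0) : ℝ≥0 :=
  if h : t < T then
    sInf { v | ∃ π : X t → Y t → ℝ≥0,
      (∀ x, ∑ y, π x y = p t k x * m) ∧ (∀ y, ∑ x, π x y = q t l y * m) ∧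
      v = ∑ x, ∑ y, NDPhi T p q d (t+1) (Fin.snoc k x) (Fin.snoc l y) (π x y) }
  else
    m * d (fun τ => k ⟨τ.1, lt_of_lt_of_le τ.2 (not_lt.mp h)⟩)
          (fun τ => l ⟨τ.1, lt_of_lt_of_le τ.2 (not_lt.mp h)⟩)
  termination_by T - t
  decreasing_by omega

/-- The Wasserstein (optimal transport) value between two probability vectors for a cost `c`. -/
def dW {A B : Type*} [Fintype A] [Fintype B]
    (P : A → ℝ≥0) (Q : B → ℝ≥0) (c : A → B → ℝ≥0) : ℝ≥0 :=
  sInf { v | ∃ π : A → B → ℝ≥0,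
    (∀ a, ∑ b, π a b = P a) ∧ (∀ b, ∑ a, π a b = Q b) ∧
    v = ∑ a, ∑ b, π a b * c a b }

/-- The conditional probability `P(i ∣ k)` of the path `i` given its stage-`t` prefix:
the product of the conditional probabilities of the steps of `i` after stage `t`.
With `t = 0` this is the (unconditional) path probability `P(i)`. -/
def NDcondP {X : ℕ → Type} {T : ℕ} (p : ∀ t, NDPre X t → X t → ℝ≥0)
    (t : ℕ) (i : NDPath X T) : ℝ≥0 :=
  ∏ τ ∈ Finset.Ico t T,
    if h : τ < T then p τ (fun s => i ⟨s.1, lt_trans s.2 h⟩) (i ⟨τ, h⟩) else 1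

end

/-!
The nested distance LP value of two trees is the root sub-tree distance `D_0`. For a feasible
plan `π`, the masses `π_{k·x, l·y}` form a transport plan between `p(k, ·)` and `q(l, ·)` scaled
by `π_{k,l}`, so backward induction gives `D_t(k,l) · π_{k,l} ≤ ∑ π(i,j) d(i,j)`, the sum over
the path pairs through `(k,l)`.
Conversely, the one-stage transport problems attain their minima (compactness), and the product
of optimal one-stage plans is feasible with cost exactly `D_0`.

In the pinned trees `A(k)`, `B(l)` every one-stage problem before stage `t` is between two point
masses, so their sub-tree distance along the prefixes `k`, `l` is constant up to stage `t`; from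
stage `t` on the pinned trees coincide with the original ones.
-/

section Transport

variable {A B : Type*} [Fintype A] [Fintype B]

theorem dW_le {P : A → ℝ≥0} {Q : B → ℝ≥0} (c : A → B → ℝ≥0) (π : A → B → ℝ≥0)
    (hP : ∀ a, ∑ b, π a b = P a) (hQ : ∀ b, ∑ a, π a b = Q b) :
    dW P Q c ≤ ∑ a, ∑ b, π a b * c a b :=
  csInf_le (OrderBot.bddBelow _) ⟨π, hP, hQ, rfl⟩

theorem dW_mul_le {P : A → ℝ≥0} {Q : B → ℝ≥0} (c : A → B → ℝ≥0) {m : ℝ≥0}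
    (ρ : A → B → ℝ≥0) (hP : ∀ a, ∑ b, ρ a b = P a * m) (hQ : ∀ b, ∑ a, ρ a b = Q b * m) :
    dW P Q c * m ≤ ∑ a, ∑ b, ρ a b * c a b := by
  rcases eq_or_ne m 0 with rfl | hm
  · simp
  calc dW P Q c * m ≤ (∑ a, ∑ b, ρ a b / m * c a b) * m := by
        gcongr
        refine dW_le c _ (fun a => ?_) (fun b => ?_)
        · rw [← Finset.sum_div, hP, mul_div_cancel_right₀ _ hm]
        · rw [← Finset.sum_div, hQ, mul_div_cancel_right₀ _ hm]
    _ = ∑ a, ∑ b, ρ a b * c a b := by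
        simp only [Finset.sum_mul]
        refine Finset.sum_congr rfl fun a _ => Finset.sum_congr rfl fun b _ => ?_
        rw [mul_right_comm, div_mul_cancel₀ _ hm]

theorem sum_mul_eq_of_marginals_ite {a₀ : A} {b₀ : B} (c : A → B → ℝ≥0) {π : A → B → ℝ≥0}
    (hP : ∀ a, ∑ b, π a b = if a = a₀ then 1 else 0)
    (hQ : ∀ b, ∑ a, π a b = if b = b₀ then 1 else 0) :
    ∑ a, ∑ b, π a b * c a b = c a₀ b₀ := by
  have hrow : ∀ a ≠ a₀, ∀ b, π a b = 0 := fun a ha => by simpa [ha] using hP a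
  have hcol : ∀ b ≠ b₀, ∀ a, π a b = 0 := fun b hb => by simpa [hb] using hQ b
  have hmass : π a₀ b₀ = 1 := by
    simpa [Fintype.sum_eq_single b₀ (fun b hb => hcol b hb a₀)] using hP a₀
  rw [Fintype.sum_eq_single a₀ (fun a ha => by simp [hrow a ha]),
    Fintype.sum_eq_single b₀ (fun b hb => by simp [hcol b hb]), hmass, one_mul]

theorem dW_ite_eq_ite (a₀ : A) (b₀ : B) (c : A → B → ℝ≥0) :
    dW (fun a => if a = a₀ then 1 else 0) (fun b => if b = b₀ then 1 else 0) c = c a₀ b₀ := by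
  have hplan : (fun a b => if a = a₀ ∧ b = b₀ then 1 else 0 : A → B → ℝ≥0) ∈ {π : A → B → ℝ≥0 |
      (∀ a, ∑ b, π a b = if a = a₀ then 1 else 0) ∧ (∀ b, ∑ a, π a b = if b = b₀ then 1 else 0)} :=
    ⟨fun a => by simp [ite_and], fun b => by simp [ite_and]⟩
  refine le_antisymm ?_ (le_csInf ⟨_, _, hplan.1, hplan.2, rfl⟩ ?_)
  · exact (dW_le c _ hplan.1 hplan.2).trans_eq (sum_mul_eq_of_marginals_ite c hplan.1 hplan.2)
  · rintro v ⟨π, hP, hQ, rfl⟩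
    exact (sum_mul_eq_of_marginals_ite c hP hQ).ge

theorem exists_plan_eq_dW {P : A → ℝ≥0} {Q : B → ℝ≥0} (c : A → B → ℝ≥0)
    (hP : ∑ a, P a = 1) (hQ : ∑ b, Q b = 1) :
    ∃ π : A → B → ℝ≥0, (∀ a, ∑ b, π a b = P a) ∧ (∀ b, ∑ a, π a b = Q b) ∧
      ∑ a, ∑ b, π a b * c a b = dW P Q c := by
  set S := {π : A → B → ℝ≥0 | (∀ a, ∑ b, π a b = P a) ∧ (∀ b, ∑ a, π a b = Q b)}
  have hS : S.Nonempty := ⟨fun a b => P a * Q b, fun a => by rw [← Finset.mul_sum, hQ, mul_one],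
    fun b => by rw [← Finset.sum_mul, hP, one_mul]⟩
  have hcompact : IsCompact S := by
    refine (isCompact_Icc (a := 0) (b := fun a _ => P a)).of_isClosed_subset ?_ ?_
    · simp only [S, Set.ofPred_and, Set.ofPred_forall]
      exact (isClosed_iInter fun a => isClosed_eq (by fun_prop) continuous_const).inter
        (isClosed_iInter fun b => isClosed_eq (by fun_prop) continuous_const)
    · rintro π ⟨hπP, -⟩
      refine ⟨fun _ _ => zero_le, fun a b => ?_⟩
      show π a b ≤ P a
      rw [← hπP a]
      exact Finset.single_le_sum (fun _ _ => zero_le) (Finset.mem_univ b)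
  obtain ⟨π, hπS, hmin⟩ := hcompact.exists_isMinOn hS
    (f := fun π => ∑ a, ∑ b, π a b * c a b) (by fun_prop)
  refine ⟨π, hπS.1, hπS.2,
    le_antisymm (le_csInf ⟨_, π, hπS.1, hπS.2, rfl⟩ ?_) (dW_le c π hπS.1 hπS.2)⟩
  rintro v ⟨π', hP', hQ', rfl⟩
  exact isMinOn_iff.mp hmin π' ⟨hP', hQ'⟩

end Transport

section ScenarioTree

variable {X Y : ℕ → Type} {T : ℕ}

theorem NDExtends_snoc_iff {t : ℕ} (ht : t < T) {i : NDPath X T} {k : NDPre X t} {x : X t} :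
    NDExtends i (Fin.snoc k x : NDPre X (t+1)) ↔ NDExtends i k ∧ i ⟨t, ht⟩ = x := by
  simp [NDExtends, Fin.forall_fin_succ', ht]

def NDprodPlan (γ : ∀ s, NDPre X s → NDPre Y s → X s → Y s → ℝ≥0) :
    ∀ t, NDPre X t → NDPre Y t → ℝ≥0
  | 0, _, _ => 1
  | t+1, k, l => NDprodPlan γ t (Fin.init k) (Fin.init l)
      * γ t (Fin.init k) (Fin.init l) (k (Fin.last t)) (l (Fin.last t))

theorem NDprodPlan_snoc {γ : ∀ s, NDPre X s → NDPre Y s → X s → Y s → ℝ≥0} {t : ℕ}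
    (k : NDPre X t) (l : NDPre Y t) (x : X t) (y : Y t) :
    NDprodPlan γ (t+1) (Fin.snoc k x) (Fin.snoc l y) = NDprodPlan γ t k l * γ t k l x y := by
  simp only [NDprodPlan, Fin.init_snoc, Fin.snoc_last]

noncomputable def NDpin (p : ∀ s, NDPre X s → X s → ℝ≥0) {t : ℕ} (k : NDPre X t) :
    ∀ s, NDPre X s → X s → ℝ≥0 :=
  fun s a x => if h : s < t then (if x = k ⟨s, h⟩ then 1 else 0) else p s a x

theorem NDpin_of_lt {p : ∀ t, NDPre X t → X t → ℝ≥0} {t : ℕ} (k : NDPre X t) {s : ℕ} (hs : s < t)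
    (a : NDPre X s) :
    NDpin p k s a = fun x => if x = k ⟨s, hs⟩ then 1 else 0 :=
  funext fun _ => dif_pos hs

theorem NDpin_of_le {p : ∀ t, NDPre X t → X t → ℝ≥0} {t : ℕ} (k : NDPre X t) {s : ℕ} (hs : t ≤ s) :
    NDpin p k s = p s :=
  funext fun _ => funext fun _ => dif_neg hs.not_gt

variable [∀ n, Fintype (X n)] [∀ n, Fintype (Y n)]

theorem NDsubw_succ {t : ℕ} (ht : t < T) (π : NDPath X T → NDPath Y T → ℝ≥0)
    (k : NDPre X t) (l : NDPre Y t) :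
    NDsubw π t k l = ∑ x : X t, ∑ y : Y t, NDsubw π (t+1) (Fin.snoc k x) (Fin.snoc l y) := by
  simp only [NDsubw, NDExtends_snoc_iff ht]
  conv_rhs =>
    enter [2, x]
    rw [Finset.sum_comm]
    enter [2, i]
    rw [Finset.sum_comm]
  conv_rhs =>
    rw [Finset.sum_comm]
    enter [2, i]
    rw [Finset.sum_comm]
  refine Finset.sum_congr rfl fun i _ => Finset.sum_congr rfl fun j _ => ?_
  by_cases hi : NDExtends i k <;> by_cases hj : NDExtends j l <;> simp [hi, hj, ite_and]

theorem NDsubw_self (π : NDPath X T → NDPath Y T → ℝ≥0) (k : NDPre X T) (l : NDPre Y T) :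
    NDsubw π T k l = π k l := by
  have hext : ∀ {Z : ℕ → Type} (i k : NDPath Z T), NDExtends i k ↔ i = k :=
    fun i k => ⟨fun h => funext fun τ => h τ τ.2, fun h τ _ => h ▸ rfl⟩
  simp [NDsubw, hext, ite_and]

theorem NDsubw_zero (π : NDPath X T → NDPath Y T → ℝ≥0) (k : NDPre X 0) (l : NDPre Y 0) :
    NDsubw π 0 k l = ∑ i, ∑ j, π i j := by
  simp [NDsubw, NDExtends]

variable {p : ∀ t, NDPre X t → X t → ℝ≥0} {q : ∀ t, NDPre Y t → Y t → ℝ≥0}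
  {d : NDPath X T → NDPath Y T → ℝ≥0}

theorem NDsub_of_lt {t : ℕ} (ht : t < T) (k : NDPre X t) (l : NDPre Y t) :
    NDsub T p q d t k l
      = dW (p t k) (q t l) (fun x y => NDsub T p q d (t+1) (Fin.snoc k x) (Fin.snoc l y)) := by
  rw [NDsub, dif_pos ht]
  rfl

theorem NDsub_of_le {t : ℕ} (ht : T ≤ t) (k : NDPre X t) (l : NDPre Y t) :
    NDsub T p q d t k l
      = d (fun τ => k ⟨τ.1, τ.2.trans_le ht⟩) (fun τ => l ⟨τ.1, τ.2.trans_le ht⟩) := by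
  rw [NDsub, dif_neg ht.not_gt]

theorem NDsub_self (k : NDPre X T) (l : NDPre Y T) : NDsub T p q d T k l = d k l :=
  NDsub_of_le le_rfl k l

variable (p q) in
def NDHasCondMarginals (π : NDPath X T → NDPath Y T → ℝ≥0) : Prop :=
  ∀ t, t < T → ∀ (k : NDPre X t) (l : NDPre Y t) (x : X t) (y : Y t),
    (∑ y' : Y t, NDsubw π (t+1) (Fin.snoc k x) (Fin.snoc l y')) = p t k x * NDsubw π t k l ∧
    (∑ x' : X t, NDsubw π (t+1) (Fin.snoc k x') (Fin.snoc l y)) = q t l y * NDsubw π t k l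

theorem NDsub_mul_NDsubw_le (hp : ∀ t, t < T → ∀ k, ∑ x, p t k x = 1)
    (hq : ∀ t, t < T → ∀ l, ∑ y, q t l y = 1) {π : NDPath X T → NDPath Y T → ℝ≥0}
    (hπ : NDHasCondMarginals p q π) {t : ℕ} (ht : t ≤ T) (k : NDPre X t) (l : NDPre Y t) :
    NDsub T p q d t k l * NDsubw π t k l ≤ NDsubw (fun i j => π i j * d i j) t k l := by
  rcases ht.lt_or_eq with ht | rfl
  · -- each marginal constraint of `π` is stated for a pair `(x, y)`, so a point of the other
    -- factor is needed to read it off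
    obtain ⟨x₀⟩ : Nonempty (X t) :=
      Finset.univ_nonempty_iff.mp
        (Finset.nonempty_of_sum_ne_zero (f := p t k) (by simp [hp t ht k]))
    obtain ⟨y₀⟩ : Nonempty (Y t) :=
      Finset.univ_nonempty_iff.mp
        (Finset.nonempty_of_sum_ne_zero (f := q t l) (by simp [hq t ht l]))
    rw [NDsub_of_lt ht, NDsubw_succ ht (fun i j => π i j * d i j)]
    calc _ ≤ ∑ x, ∑ y, NDsubw π (t+1) (Fin.snoc k x) (Fin.snoc l y)
              * NDsub T p q d (t+1) (Fin.snoc k x) (Fin.snoc l y) :=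
          dW_mul_le _ _ (fun x => (hπ t ht k l x y₀).1) (fun y => (hπ t ht k l x₀ y).2)
      _ ≤ _ := by
          gcongr with x _ y _
          rw [mul_comm]
          exact NDsub_mul_NDsubw_le hp hq hπ ht _ _
  · rw [NDsub_self, NDsubw_self, NDsubw_self, mul_comm]
termination_by T - t

theorem NDsub_congr {p' : ∀ t, NDPre X t → X t → ℝ≥0} {q' : ∀ t, NDPre Y t → Y t → ℝ≥0} {t : ℕ}
    (hp : ∀ s, t ≤ s → p' s = p s) (hq : ∀ s, t ≤ s → q' s = q s)
    {s : ℕ} (hs : t ≤ s) (a : NDPre X s) (b : NDPre Y s) :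
    NDsub T p' q' d s a b = NDsub T p q d s a b := by
  by_cases hsT : s < T
  · rw [NDsub_of_lt hsT, NDsub_of_lt hsT, hp s hs, hq s hs]
    congr 1
    funext x y
    exact NDsub_congr hp hq (hs.trans s.le_succ) _ _
  · rw [NDsub_of_le (not_lt.mp hsT), NDsub_of_le (not_lt.mp hsT)]
termination_by T - s

theorem NDsubw_NDprodPlan {γ : ∀ s, NDPre X s → NDPre Y s → X s → Y s → ℝ≥0}
    (hγ : ∀ s, s < T → ∀ a b, ∑ x, ∑ y, γ s a b x y = 1)
    {t : ℕ} (ht : t ≤ T) (k : NDPre X t) (l : NDPre Y t) :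
    NDsubw (NDprodPlan γ T) t k l = NDprodPlan γ t k l := by
  rcases ht.lt_or_eq with ht | rfl
  · simp only [NDsubw_succ ht, NDsubw_NDprodPlan hγ ht, NDprodPlan_snoc, ← Finset.mul_sum, hγ t ht,
      mul_one]
  · exact NDsubw_self _ k l
termination_by T - t

theorem NDsubw_NDprodPlan_mul {γ : ∀ s, NDPre X s → NDPre Y s → X s → Y s → ℝ≥0}
    (hγ : ∀ s, s < T → ∀ a b,
      ∑ x, ∑ y, γ s a b x y * NDsub T p q d (s+1) (Fin.snoc a x) (Fin.snoc b y)
        = NDsub T p q d s a b)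
    {t : ℕ} (ht : t ≤ T) (k : NDPre X t) (l : NDPre Y t) :
    NDsubw (fun i j => NDprodPlan γ T i j * d i j) t k l
      = NDprodPlan γ t k l * NDsub T p q d t k l := by
  rcases ht.lt_or_eq with ht | rfl
  · simp only [NDsubw_succ ht, NDsubw_NDprodPlan_mul hγ ht, NDprodPlan_snoc, mul_assoc,
      ← Finset.mul_sum, hγ t ht]
  · rw [NDsubw_self, NDsub_self]
termination_by T - t

theorem NDHasCondMarginals_NDprodPlan {γ : ∀ s, NDPre X s → NDPre Y s → X s → Y s → ℝ≥0}
    (hp : ∀ t, t < T → ∀ k, ∑ x, p t k x = 1)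
    (hγ : ∀ s, s < T → ∀ a b,
      (∀ x, ∑ y, γ s a b x y = p s a x) ∧ (∀ y, ∑ x, γ s a b x y = q s b y)) :
    NDHasCondMarginals p q (NDprodPlan γ T) := by
  have hmass : ∀ s, s < T → ∀ a b, ∑ x, ∑ y, γ s a b x y = 1 := fun s hs a b => by
    simp only [(hγ s hs a b).1, hp s hs a]
  intro t ht k l x y
  simp only [NDsubw_NDprodPlan hmass ht, NDsubw_NDprodPlan hmass ht.le, NDprodPlan_snoc,
    ← Finset.mul_sum, (hγ t ht k l).1, (hγ t ht k l).2]
  exact ⟨mul_comm _ _, mul_comm _ _⟩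

theorem NDval_eq_NDsub_zero (hp : ∀ t, t < T → ∀ k, ∑ x, p t k x = 1)
    (hq : ∀ t, t < T → ∀ l, ∑ y, q t l y = 1) (k₀ : NDPre X 0) (l₀ : NDPre Y 0) :
    NDval T p q d = NDsub T p q d 0 k₀ l₀ := by
  have hopt : ∀ s (a : NDPre X s) (b : NDPre Y s), ∃ γ : X s → Y s → ℝ≥0, s < T →
      ((∀ x, ∑ y, γ x y = p s a x) ∧ (∀ y, ∑ x, γ x y = q s b y)) ∧
      ∑ x, ∑ y, γ x y * NDsub T p q d (s+1) (Fin.snoc a x) (Fin.snoc b y)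
        = NDsub T p q d s a b := by
    intro s a b
    by_cases hs : s < T
    · obtain ⟨γ, hγp, hγq, hγ⟩ := exists_plan_eq_dW
        (fun x y => NDsub T p q d (s+1) (Fin.snoc a x) (Fin.snoc b y)) (hp s hs a) (hq s hs b)
      exact ⟨γ, fun _ => ⟨⟨hγp, hγq⟩, hγ.trans (NDsub_of_lt hs a b).symm⟩⟩
    · exact ⟨0, fun h => absurd h hs⟩
  choose γ hγ using hopt
  have hmass : NDsubw (NDprodPlan γ T) 0 k₀ l₀ = 1 :=
    NDsubw_NDprodPlan (fun s hs a b => by simp only [((hγ s a b hs).1).1, hp s hs a])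
      (Nat.zero_le T) k₀ l₀
  have hcost := NDsubw_NDprodPlan_mul (fun s hs a b => (hγ s a b hs).2) (Nat.zero_le T) k₀ l₀
  rw [NDsubw_zero] at hmass hcost
  refine IsLeast.csInf_eq ⟨⟨NDprodPlan γ T, hmass,
    NDHasCondMarginals_NDprodPlan hp fun s hs a b => (hγ s a b hs).1, ?_⟩, ?_⟩
  · rw [hcost]
    exact (one_mul _).symm
  · rintro v ⟨π, hπ, hmarg, rfl⟩
    have := NDsub_mul_NDsubw_le (d := d) hp hq hmarg (Nat.zero_le T) k₀ l₀
    rwa [NDsubw_zero, NDsubw_zero, hπ, mul_one] at this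

theorem sum_NDpin (hp : ∀ s, s < T → ∀ a, ∑ x, p s a x = 1) {t : ℕ} (k : NDPre X t) :
    ∀ s, s < T → ∀ a, ∑ x, NDpin p k s a x = 1 := by
  intro s hs a
  rcases lt_or_ge s t with hst | hts
  · simp [NDpin_of_lt k hst]
  · rw [NDpin_of_le k hts, hp s hs a]

theorem NDsub_NDpin_take {t : ℕ} (k : NDPre X t) (l : NDPre Y t) {s : ℕ} (hs : s ≤ t) :
    NDsub T (NDpin p k) (NDpin q l) d s (Fin.take s hs k) (Fin.take s hs l)
      = NDsub T (NDpin p k) (NDpin q l) d t k l := by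
  rcases hs.lt_or_eq with hst | rfl
  · by_cases hsT : s < T
    · rw [NDsub_of_lt hsT, NDpin_of_lt k hst, NDpin_of_lt l hst, dW_ite_eq_ite,
        ← Fin.take_succ_eq_snoc, ← Fin.take_succ_eq_snoc]
      exact NDsub_NDpin_take k l hst
    · -- past the horizon both sides are `d` of the truncations of `k` and `l`
      rw [NDsub_of_le (not_lt.mp hsT), NDsub_of_le ((not_lt.mp hsT).trans hst.le)]
      rfl
  · rw [Fin.take_eq_self, Fin.take_eq_self]
termination_by t - s

end ScenarioTree

theorem subtreeDistance_eq_NDval_of_modified_trees_general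
    (T : ℕ) (X Y : ℕ → Type)
    [∀ n, Fintype (X n)] [∀ n, Fintype (Y n)]
    (p : ∀ t, NDPre X t → X t → ℝ≥0) (q : ∀ t, NDPre Y t → Y t → ℝ≥0)
    (hp : ∀ t, t < T → ∀ k, ∑ x, p t k x = 1)
    (hq : ∀ t, t < T → ∀ l, ∑ y, q t l y = 1)
    (d : NDPath X T → NDPath Y T → ℝ≥0)
    (t : ℕ) (k : NDPre X t) (l : NDPre Y t) :
    NDsub T p q d t k l
      = NDval T
          (fun s a x => if h : s < t then (if x = k ⟨s, h⟩ then 1 else 0) else p s a x)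
          (fun s b y => if h : s < t then (if y = l ⟨s, h⟩ then 1 else 0) else q s b y)
          d := by
  change NDsub T p q d t k l = NDval T (NDpin p k) (NDpin q l) d
  rw [NDval_eq_NDsub_zero (sum_NDpin hp k) (sum_NDpin hq l) (Fin.take 0 t.zero_le k)
    (Fin.take 0 t.zero_le l), NDsub_NDpin_take k l t.zero_le]
  exact (NDsub_congr (fun s => NDpin_of_le k) (fun s => NDpin_of_le l) le_rfl k l).symm

/-- The sub-tree distance `D_t(k,l)` equals the nested distance LP value of
the modified trees `A(k)` and `B(l)`, whose conditional probabilities up to stage `t` are the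
point masses along the prefixes `k` and `l`, and agree with the original trees afterwards. -/
theorem subtreeDistance_eq_NDval_of_modified_trees
    (T : ℕ) (hT : 1 ≤ T) (X Y : ℕ → Type)
    [∀ n, Fintype (X n)] [∀ n, Nonempty (X n)]
    [∀ n, Fintype (Y n)] [∀ n, Nonempty (Y n)]
    (p : ∀ t, NDPre X t → X t → ℝ≥0) (q : ∀ t, NDPre Y t → Y t → ℝ≥0)
    (hp : ∀ t, t < T → ∀ k, ∑ x, p t k x = 1)
    (hq : ∀ t, t < T → ∀ l, ∑ y, q t l y = 1)
    (d : NDPath X T → NDPath Y T → ℝ≥0)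
    (t : ℕ) (ht : t ≤ T) (k : NDPre X t) (l : NDPre Y t) :
    NDsub T p q d t k l
      = NDval T
          (fun s a x => if h : s < t then (if x = k ⟨s, h⟩ then 1 else 0) else p s a x)
          (fun s b y => if h : s < t then (if y = l ⟨s, h⟩ then 1 else 0) else q s b y)
          d :=
  subtreeDistance_eq_NDval_of_modified_trees_general T X Y p q hp hq d t k l
end

section
/- Let A_1, A_2, B_1, B_2 be finite nonempty types, let P_1 : A_1 → ℝ≥0, P_2 : A_2 → ℝ≥0, Q_1 : B_1 → ℝ≥0, Q_2 : B_2 → ℝ≥0 be probability vectors, and let c_1 : A_1×B_1 → ℝ≥0 and c_2 : A_2×B_2 → ℝ≥0 be costs. Define the product probability vectors (P_1⊗P_2)(a_1,a_2) := P_1(a_1)·P_2(a_2) and (Q_1⊗Q_2)(b_1,b_2) := Q_1(b_1)·Q_2(b_2), and the additive cost c((a_1,a_2),(b_1,b_2)) := c_1(a_1,b_1) + c_2(a_2,b_2). Then d_W(P_1⊗P_2, Q_1⊗Q_2; c) = d_W(P_1,Q_1;c_1) + d_W(P_2,Q_2;c_2). -/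
open scoped NNReal Classical
open Finset

noncomputable section

/-! Both inequalities come from operations on transport plans. The product of a plan for
`(P₁, Q₁)` and a plan for `(P₂, Q₂)` is a plan for the product laws whose additive cost is the
sum of the two costs, because each factor has total mass one; this gives `≤`. Conversely, the two
marginals of a plan for the product laws are plans for `(P₁, Q₁)` and `(P₂, Q₂)`, and the additive
cost of the plan is the sum of their costs; this gives `≥`. -/

section Coupling

variable {A B A₁ A₂ B₁ B₂ : Type*}

def IsCoupling [Fintype A] [Fintype B] (P : A → ℝ≥0) (Q : B → ℝ≥0) (π : A → B → ℝ≥0) : Prop :=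
  (∀ a, ∑ b, π a b = P a) ∧ (∀ b, ∑ a, π a b = Q b)

def transportCost [Fintype A] [Fintype B] (π c : A → B → ℝ≥0) : ℝ≥0 :=
  ∑ a, ∑ b, π a b * c a b

def prodPlan (π₁ : A₁ → B₁ → ℝ≥0) (π₂ : A₂ → B₂ → ℝ≥0) : A₁ × A₂ → B₁ × B₂ → ℝ≥0 :=
  fun a b => π₁ a.1 b.1 * π₂ a.2 b.2

def fstMarginal [Fintype A₂] [Fintype B₂] (π : A₁ × A₂ → B₁ × B₂ → ℝ≥0) : A₁ → B₁ → ℝ≥0 :=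
  fun a₁ b₁ => ∑ a₂, ∑ b₂, π (a₁, a₂) (b₁, b₂)

def sndMarginal [Fintype A₁] [Fintype B₁] (π : A₁ × A₂ → B₁ × B₂ → ℝ≥0) : A₂ → B₂ → ℝ≥0 :=
  fun a₂ b₂ => ∑ a₁, ∑ b₁, π (a₁, a₂) (b₁, b₂)

theorem fstMarginal_prodPlan [Fintype A₂] [Fintype B₂]
    (π₁ : A₁ → B₁ → ℝ≥0) (π₂ : A₂ → B₂ → ℝ≥0) :
    fstMarginal (prodPlan π₁ π₂) = fun a b => π₁ a b * ∑ a, ∑ b, π₂ a b := by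
  ext a b
  simp [fstMarginal, prodPlan, mul_sum]

theorem sndMarginal_prodPlan [Fintype A₁] [Fintype B₁]
    (π₁ : A₁ → B₁ → ℝ≥0) (π₂ : A₂ → B₂ → ℝ≥0) :
    sndMarginal (prodPlan π₁ π₂) = fun a b => (∑ a, ∑ b, π₁ a b) * π₂ a b := by
  ext a b
  simp [sndMarginal, prodPlan, sum_mul]

variable [Fintype A] [Fintype B] [Fintype A₁] [Fintype A₂] [Fintype B₁] [Fintype B₂]

theorem dW_eq_iInf (P : A → ℝ≥0) (Q : B → ℝ≥0) (c : A → B → ℝ≥0) :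
    dW P Q c = ⨅ π : {π // IsCoupling P Q π}, transportCost π.1 c := by
  rw [dW, iInf]
  congr 1
  ext v
  simp [IsCoupling, transportCost, eq_comm, and_assoc]

theorem dW_le_transportCost {P : A → ℝ≥0} {Q : B → ℝ≥0} {π : A → B → ℝ≥0}
    (h : IsCoupling P Q π) (c : A → B → ℝ≥0) : dW P Q c ≤ transportCost π c :=
  dW_eq_iInf P Q c ▸ ciInf_le (OrderBot.bddBelow _) (⟨π, h⟩ : {π // IsCoupling P Q π})

theorem isCoupling_mul {P : A → ℝ≥0} {Q : B → ℝ≥0} (hP : ∑ a, P a = 1) (hQ : ∑ b, Q b = 1) :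
    IsCoupling P Q (fun a b => P a * Q b) :=
  ⟨fun a => by rw [← mul_sum, hQ, mul_one], fun b => by rw [← sum_mul, hP, one_mul]⟩

theorem IsCoupling.sum_sum {P : A → ℝ≥0} {Q : B → ℝ≥0} {π : A → B → ℝ≥0}
    (h : IsCoupling P Q π) : ∑ a, ∑ b, π a b = ∑ a, P a :=
  sum_congr rfl fun a _ => h.1 a

theorem IsCoupling.prodPlan {P₁ : A₁ → ℝ≥0} {Q₁ : B₁ → ℝ≥0} {P₂ : A₂ → ℝ≥0} {Q₂ : B₂ → ℝ≥0}
    {π₁ : A₁ → B₁ → ℝ≥0} {π₂ : A₂ → B₂ → ℝ≥0}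
    (h₁ : IsCoupling P₁ Q₁ π₁) (h₂ : IsCoupling P₂ Q₂ π₂) :
    IsCoupling (fun a => P₁ a.1 * P₂ a.2) (fun b => Q₁ b.1 * Q₂ b.2) (prodPlan π₁ π₂) := by
  constructor
  · intro a
    simp only [_root_.prodPlan, Fintype.sum_prod_type, ← mul_sum, h₂.1, ← sum_mul, h₁.1]
  · intro b
    simp only [_root_.prodPlan, Fintype.sum_prod_type, ← mul_sum, h₂.2, ← sum_mul, h₁.2]

theorem IsCoupling.fstMarginal {P : A₁ × A₂ → ℝ≥0} {Q : B₁ × B₂ → ℝ≥0}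
    {π : A₁ × A₂ → B₁ × B₂ → ℝ≥0} (h : IsCoupling P Q π) :
    IsCoupling (fun a₁ => ∑ a₂, P (a₁, a₂)) (fun b₁ => ∑ b₂, Q (b₁, b₂)) (fstMarginal π) := by
  constructor
  · intro a₁
    simp only [_root_.fstMarginal, ← h.1, Fintype.sum_prod_type]
    exact sum_comm
  · intro b₁
    simp only [_root_.fstMarginal, ← h.2, Fintype.sum_prod_type]
    exact sum_comm_cycle

theorem IsCoupling.sndMarginal {P : A₁ × A₂ → ℝ≥0} {Q : B₁ × B₂ → ℝ≥0}
    {π : A₁ × A₂ → B₁ × B₂ → ℝ≥0} (h : IsCoupling P Q π) :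
    IsCoupling (fun a₂ => ∑ a₁, P (a₁, a₂)) (fun b₂ => ∑ b₁, Q (b₁, b₂)) (sndMarginal π) := by
  constructor
  · intro a₂
    simp only [_root_.sndMarginal, ← h.1, Fintype.sum_prod_type]
    exact sum_comm_cycle.symm
  · intro b₂
    simp only [_root_.sndMarginal, ← h.2, Fintype.sum_prod_type]
    exact sum_comm_cycle.trans (sum_congr rfl fun _ _ => sum_comm)

theorem transportCost_add_cost (π : A₁ × A₂ → B₁ × B₂ → ℝ≥0)
    (c₁ : A₁ → B₁ → ℝ≥0) (c₂ : A₂ → B₂ → ℝ≥0) :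
    transportCost π (fun a b => c₁ a.1 b.1 + c₂ a.2 b.2)
      = transportCost (fstMarginal π) c₁ + transportCost (sndMarginal π) c₂ := by
  simp only [transportCost, fstMarginal, sndMarginal, mul_add, sum_add_distrib,
    Fintype.sum_prod_type, sum_mul]
  congr 1
  · exact sum_congr rfl fun _ _ => sum_comm
  · exact sum_comm.trans (sum_congr rfl fun _ _ => sum_comm_cycle)

theorem transportCost_prodPlan {P₁ : A₁ → ℝ≥0} {Q₁ : B₁ → ℝ≥0} {P₂ : A₂ → ℝ≥0}
    {Q₂ : B₂ → ℝ≥0} {π₁ : A₁ → B₁ → ℝ≥0} {π₂ : A₂ → B₂ → ℝ≥0}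
    (h₁ : IsCoupling P₁ Q₁ π₁) (h₂ : IsCoupling P₂ Q₂ π₂)
    (hP₁ : ∑ a, P₁ a = 1) (hP₂ : ∑ a, P₂ a = 1) (c₁ : A₁ → B₁ → ℝ≥0) (c₂ : A₂ → B₂ → ℝ≥0) :
    transportCost (prodPlan π₁ π₂) (fun a b => c₁ a.1 b.1 + c₂ a.2 b.2)
      = transportCost π₁ c₁ + transportCost π₂ c₂ := by
  rw [transportCost_add_cost, fstMarginal_prodPlan, sndMarginal_prodPlan, h₁.sum_sum,
    h₂.sum_sum, hP₁, hP₂]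
  simp only [mul_one, one_mul]

end Coupling

theorem dW_prod_add_cost_general
    (A₁ A₂ B₁ B₂ : Type*)
    [Fintype A₁] [Fintype A₂]
    [Fintype B₁] [Fintype B₂]
    (P₁ : A₁ → ℝ≥0) (P₂ : A₂ → ℝ≥0) (Q₁ : B₁ → ℝ≥0) (Q₂ : B₂ → ℝ≥0)
    (hP₁ : ∑ a, P₁ a = 1) (hP₂ : ∑ a, P₂ a = 1)
    (hQ₁ : ∑ b, Q₁ b = 1) (hQ₂ : ∑ b, Q₂ b = 1)
    (c₁ : A₁ → B₁ → ℝ≥0) (c₂ : A₂ → B₂ → ℝ≥0) :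
    dW (fun a : A₁ × A₂ => P₁ a.1 * P₂ a.2) (fun b : B₁ × B₂ => Q₁ b.1 * Q₂ b.2)
        (fun a b => c₁ a.1 b.1 + c₂ a.2 b.2)
      = dW P₁ Q₁ c₁ + dW P₂ Q₂ c₂ := by
  have h₁ := isCoupling_mul hP₁ hQ₁
  have h₂ := isCoupling_mul hP₂ hQ₂
  apply le_antisymm
  · have : Nonempty {π // IsCoupling P₁ Q₁ π} := ⟨⟨_, h₁⟩⟩
    have : Nonempty {π // IsCoupling P₂ Q₂ π} := ⟨⟨_, h₂⟩⟩
    rw [dW_eq_iInf P₁, dW_eq_iInf P₂]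
    refine NNReal.le_iInf_add_iInf fun π₁ π₂ => ?_
    rw [← transportCost_prodPlan π₁.2 π₂.2 hP₁ hP₂]
    exact dW_le_transportCost (π₁.2.prodPlan π₂.2) _
  · rw [dW_eq_iInf (fun a : A₁ × A₂ => _)]
    have : Nonempty {π // _} := ⟨⟨_, h₁.prodPlan h₂⟩⟩
    refine le_ciInf fun π => ?_
    rw [transportCost_add_cost]
    have hfst : IsCoupling P₁ Q₁ (fstMarginal π.1) := by
      simpa only [← mul_sum, hP₂, hQ₂, mul_one] using π.2.fstMarginal
    have hsnd : IsCoupling P₂ Q₂ (sndMarginal π.1) := by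
      simpa only [← sum_mul, hP₁, hQ₁, one_mul] using π.2.sndMarginal
    exact add_le_add (dW_le_transportCost hfst c₁) (dW_le_transportCost hsnd c₂)

/-- The Wasserstein value of product probability vectors with an additive
cost splits as the sum of the two Wasserstein values. -/
theorem dW_prod_add_cost
    (A₁ A₂ B₁ B₂ : Type*)
    [Fintype A₁] [Nonempty A₁] [Fintype A₂] [Nonempty A₂]
    [Fintype B₁] [Nonempty B₁] [Fintype B₂] [Nonempty B₂]
    (P₁ : A₁ → ℝ≥0) (P₂ : A₂ → ℝ≥0) (Q₁ : B₁ → ℝ≥0) (Q₂ : B₂ → ℝ≥0)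
    (hP₁ : ∑ a, P₁ a = 1) (hP₂ : ∑ a, P₂ a = 1)
    (hQ₁ : ∑ b, Q₁ b = 1) (hQ₂ : ∑ b, Q₂ b = 1)
    (c₁ : A₁ → B₁ → ℝ≥0) (c₂ : A₂ → B₂ → ℝ≥0) :
    dW (fun a : A₁ × A₂ => P₁ a.1 * P₂ a.2) (fun b : B₁ × B₂ => Q₁ b.1 * Q₂ b.2)
        (fun a b => c₁ a.1 b.1 + c₂ a.2 b.2)
      = dW P₁ Q₁ c₁ + dW P₂ Q₂ c₂ :=
  dW_prod_add_cost_general A₁ A₂ B₁ B₂ P₁ P₂ Q₁ Q₂ hP₁ hP₂ hQ₁ hQ₂ c₁ c₂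
end
end
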